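/- Forward slicing preserves binary meets: if e ⇒ v and e₁, e₂ ⊑ e with e₁ ↗ v₁ and e₂ ↗ v₂, then e₁ ⊓ e₂ ↗ v₁ ⊓ v₂, where ⊓ denotes the meet in the prefix lattices ↓e and ↓v respectively. -/
import Mathlib


/-- Partial expressions of the simple language, with holes. -/
inductive Expr where
  | hole : Expr
  | num : ℕ → Expr
  | add : Expr → Expr → Expr
  | pair : Expr → Expr → Expr
  | fst : Expr → Expr
  | snd : Expr → Expr
deriving DecidableEq

/-- The prefix relation ⊑ on partial expressions. -/
inductive Sq : Expr → Expr → Prop where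
  | hole : ∀ e, Sq Expr.hole e
  | num : ∀ n, Sq (Expr.num n) (Expr.num n)
  | add : ∀ {a a' b b'}, Sq a a' → Sq b b' → Sq (Expr.add a b) (Expr.add a' b')
  | pair : ∀ {a a' b b'}, Sq a a' → Sq b b' → Sq (Expr.pair a b) (Expr.pair a' b')
  | fst : ∀ {a a'}, Sq a a' → Sq (Expr.fst a) (Expr.fst a')
  | snd : ∀ {a a'}, Sq a a' → Sq (Expr.snd a) (Expr.snd a')

/-- Partial values, with holes. -/
inductive Val where
  | hole : Val
  | num : ℕ → Val
  | pair : Val → Val → Val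
deriving DecidableEq

/-- The prefix relation ⊑ on partial values. -/
inductive VSq : Val → Val → Prop where
  | hole : ∀ v, VSq Val.hole v
  | num : ∀ n, VSq (Val.num n) (Val.num n)
  | pair : ∀ {a a' b b'}, VSq a a' → VSq b b' → VSq (Val.pair a b) (Val.pair a' b')

/-- Big-step evaluation. -/
inductive Eval : Expr → Val → Prop where
  | num : ∀ n, Eval (Expr.num n) (Val.num n)
  | add : ∀ {a b n m}, Eval a (Val.num n) → Eval b (Val.num m) →
      Eval (Expr.add a b) (Val.num (n + m))
  | pair : ∀ {a b va vb}, Eval a va → Eval b vb →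
      Eval (Expr.pair a b) (Val.pair va vb)
  | fst : ∀ {a v₁ v₂}, Eval a (Val.pair v₁ v₂) → Eval (Expr.fst a) v₁
  | snd : ∀ {a v₁ v₂}, Eval a (Val.pair v₁ v₂) → Eval (Expr.snd a) v₂

/-- Forward slicing: evaluation extended with hole propagation. -/
inductive Fwd : Expr → Val → Prop where
  | hole : Fwd Expr.hole Val.hole
  | num : ∀ n, Fwd (Expr.num n) (Val.num n)
  | add : ∀ {a b n m}, Fwd a (Val.num n) → Fwd b (Val.num m) →
      Fwd (Expr.add a b) (Val.num (n + m))
  | addHoleL : ∀ {a b}, Fwd a Val.hole → Fwd (Expr.add a b) Val.hole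
  | addHoleR : ∀ {a b v}, Fwd a v → Fwd b Val.hole → Fwd (Expr.add a b) Val.hole
  | pair : ∀ {a b va vb}, Fwd a va → Fwd b vb →
      Fwd (Expr.pair a b) (Val.pair va vb)
  | fst : ∀ {a v₁ v₂}, Fwd a (Val.pair v₁ v₂) → Fwd (Expr.fst a) v₁
  | fstHole : ∀ {a}, Fwd a Val.hole → Fwd (Expr.fst a) Val.hole
  | snd : ∀ {a v₁ v₂}, Fwd a (Val.pair v₁ v₂) → Fwd (Expr.snd a) v₂
  | sndHole : ∀ {a}, Fwd a Val.hole → Fwd (Expr.snd a) Val.hole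

/-- Meet of partial values. -/
def vmeet : Val → Val → Val
  | Val.num n, Val.num m => if n = m then Val.num n else Val.hole
  | Val.pair a b, Val.pair c d => Val.pair (vmeet a c) (vmeet b d)
  | _, _ => Val.hole

/-- Meet of partial expressions. -/
def emeet : Expr → Expr → Expr
  | Expr.num n, Expr.num m => if n = m then Expr.num n else Expr.hole
  | Expr.add a b, Expr.add c d => Expr.add (emeet a c) (emeet b d)
  | Expr.pair a b, Expr.pair c d => Expr.pair (emeet a c) (emeet b d)
  | Expr.fst a, Expr.fst b => Expr.fst (emeet a b)
  | Expr.snd a, Expr.snd b => Expr.snd (emeet a b)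
  | _, _ => Expr.hole


lemma vmeet_hole_left (v : Val) : vmeet Val.hole v = Val.hole := by cases v <;> rfl
lemma vmeet_hole_right (v : Val) : vmeet v Val.hole = Val.hole := by cases v <;> rfl
lemma emeet_hole_left (e : Expr) : emeet Expr.hole e = Expr.hole := by cases e <;> rfl
lemma emeet_hole_right (e : Expr) : emeet e Expr.hole = Expr.hole := by cases e <;> rfl

lemma fwd_hole_inv {v : Val} (h : Fwd Expr.hole v) : v = Val.hole := by cases h; rfl

theorem fwd_prefix : ∀ {e v}, Eval e v → ∀ {e' v'}, Sq e' e → Fwd e' v' → VSq v' v := by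
  intro e v hev
  induction hev with
  | num n =>
    intro e' v' hs hf
    cases hs with
    | hole => cases hf; exact VSq.hole _
    | num => cases hf; exact VSq.num _
  | add ha hb iha ihb =>
    intro e' v' hs hf
    cases hs with
    | hole => cases hf; exact VSq.hole _
    | add hsa hsb =>
      cases hf with
      | add hfa hfb =>
        cases iha hsa hfa
        cases ihb hsb hfb
        exact VSq.num _
      | addHoleL _ => exact VSq.hole _
      | addHoleR _ _ => exact VSq.hole _
  | pair ha hb iha ihb =>
    intro e' v' hs hf
    cases hs with
    | hole => cases hf; exact VSq.hole _
    | pair hsa hsb =>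
      cases hf with
      | pair hfa hfb => exact VSq.pair (iha hsa hfa) (ihb hsb hfb)
  | fst ha iha =>
    intro e' v' hs hf
    cases hs with
    | hole => cases hf; exact VSq.hole _
    | fst hsa =>
      cases hf with
      | fst hfa => cases iha hsa hfa with | pair h1 h2 => exact h1
      | fstHole _ => exact VSq.hole _
  | snd ha iha =>
    intro e' v' hs hf
    cases hs with
    | hole => cases hf; exact VSq.hole _
    | snd hsa =>
      cases hf with
      | snd hfa => cases iha hsa hfa with | pair h1 h2 => exact h2
      | sndHole _ => exact VSq.hole _

theorem fwd_preserves_meets :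
    ∀ e v e₁ e₂ v₁ v₂, Eval e v → Sq e₁ e → Sq e₂ e →
      Fwd e₁ v₁ → Fwd e₂ v₂ → Fwd (emeet e₁ e₂) (vmeet v₁ v₂)  := by
  intro e v e₁ e₂ v₁ v₂ hev
  induction hev generalizing e₁ e₂ v₁ v₂ with
  | num n =>
    intro hs₁ hs₂ hf₁ hf₂
    cases hs₁ with
    | hole =>
      cases fwd_hole_inv hf₁
      rw [emeet_hole_left, vmeet_hole_left]; exact Fwd.hole
    | num =>
      cases hs₂ with
      | hole =>
        cases fwd_hole_inv hf₂
        rw [emeet_hole_right, vmeet_hole_right]; exact Fwd.hole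
      | num =>
        cases hf₁; cases hf₂
        simp [emeet, vmeet]; exact Fwd.num n
  | add ha hb iha ihb =>
    intro hs₁ hs₂ hf₁ hf₂
    cases hs₁ with
    | hole =>
      cases fwd_hole_inv hf₁
      rw [emeet_hole_left, vmeet_hole_left]; exact Fwd.hole
    | add hsa₁ hsb₁ =>
      cases hs₂ with
      | hole =>
        cases fwd_hole_inv hf₂
        rw [emeet_hole_right, vmeet_hole_right]; exact Fwd.hole
      | add hsa₂ hsb₂ =>
        cases hf₁ with
        | add hfa₁ hfb₁ =>
          cases hf₂ with
          | add hfa₂ hfb₂ =>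
            cases fwd_prefix ha hsa₁ hfa₁
            cases fwd_prefix ha hsa₂ hfa₂
            cases fwd_prefix hb hsb₁ hfb₁
            cases fwd_prefix hb hsb₂ hfb₂
            have h1 := iha _ _ _ _ hsa₁ hsa₂ hfa₁ hfa₂
            have h2 := ihb _ _ _ _ hsb₁ hsb₂ hfb₁ hfb₂
            simp [emeet, vmeet] at h1 h2 ⊢
            exact Fwd.add h1 h2
          | addHoleL hfa₂ =>
            first | rw [vmeet_hole_left] | rw [vmeet_hole_right] | skip
            have h1 := iha _ _ _ _ hsa₁ hsa₂ hfa₁ hfa₂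
            first | rw [vmeet_hole_left] at h1 | rw [vmeet_hole_right] at h1 | skip
            exact Fwd.addHoleL h1
          | addHoleR hfa₂ hfb₂ =>
            first | rw [vmeet_hole_left] | rw [vmeet_hole_right] | skip
            have h1 := iha _ _ _ _ hsa₁ hsa₂ hfa₁ hfa₂
            have h2 := ihb _ _ _ _ hsb₁ hsb₂ hfb₁ hfb₂
            first | rw [vmeet_hole_left] at h2 | rw [vmeet_hole_right] at h2 | skip
            exact Fwd.addHoleR h1 h2
        | addHoleL hfa₁ =>
          first | rw [vmeet_hole_left] | rw [vmeet_hole_right] | skip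
          cases hf₂ with
          | add hfa₂ hfb₂ =>
            have h1 := iha _ _ _ _ hsa₁ hsa₂ hfa₁ hfa₂
            first | rw [vmeet_hole_left] at h1 | rw [vmeet_hole_right] at h1 | skip
            exact Fwd.addHoleL h1
          | addHoleL hfa₂ =>
            have h1 := iha _ _ _ _ hsa₁ hsa₂ hfa₁ hfa₂
            first | rw [vmeet_hole_left] at h1 | rw [vmeet_hole_right] at h1 | skip
            exact Fwd.addHoleL h1
          | addHoleR hfa₂ hfb₂ =>
            have h1 := iha _ _ _ _ hsa₁ hsa₂ hfa₁ hfa₂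
            first | rw [vmeet_hole_left] at h1 | rw [vmeet_hole_right] at h1 | skip
            exact Fwd.addHoleL h1
        | addHoleR hfa₁ hfb₁ =>
          first | rw [vmeet_hole_left] | rw [vmeet_hole_right] | skip
          cases hf₂ with
          | add hfa₂ hfb₂ =>
            have h1 := iha _ _ _ _ hsa₁ hsa₂ hfa₁ hfa₂
            have h2 := ihb _ _ _ _ hsb₁ hsb₂ hfb₁ hfb₂
            first | rw [vmeet_hole_left] at h2 | rw [vmeet_hole_right] at h2 | skip
            exact Fwd.addHoleR h1 h2
          | addHoleL hfa₂ =>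
            have h1 := iha _ _ _ _ hsa₁ hsa₂ hfa₁ hfa₂
            first | rw [vmeet_hole_left] at h1 | rw [vmeet_hole_right] at h1 | skip
            exact Fwd.addHoleL h1
          | addHoleR hfa₂ hfb₂ =>
            have h1 := iha _ _ _ _ hsa₁ hsa₂ hfa₁ hfa₂
            have h2 := ihb _ _ _ _ hsb₁ hsb₂ hfb₁ hfb₂
            first | rw [vmeet_hole_left] at h2 | rw [vmeet_hole_right] at h2 | skip
            exact Fwd.addHoleR h1 h2
  | pair ha hb iha ihb =>
    intro hs₁ hs₂ hf₁ hf₂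
    cases hs₁ with
    | hole =>
      cases fwd_hole_inv hf₁
      rw [emeet_hole_left, vmeet_hole_left]; exact Fwd.hole
    | pair hsa₁ hsb₁ =>
      cases hs₂ with
      | hole =>
        cases fwd_hole_inv hf₂
        rw [emeet_hole_right, vmeet_hole_right]; exact Fwd.hole
      | pair hsa₂ hsb₂ =>
        cases hf₁ with
        | pair hfa₁ hfb₁ =>
          cases hf₂ with
          | pair hfa₂ hfb₂ =>
            exact Fwd.pair (iha _ _ _ _ hsa₁ hsa₂ hfa₁ hfa₂) (ihb _ _ _ _ hsb₁ hsb₂ hfb₁ hfb₂)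
  | fst ha iha =>
    intro hs₁ hs₂ hf₁ hf₂
    cases hs₁ with
    | hole =>
      cases fwd_hole_inv hf₁
      rw [emeet_hole_left, vmeet_hole_left]; exact Fwd.hole
    | fst hsa₁ =>
      cases hs₂ with
      | hole =>
        cases fwd_hole_inv hf₂
        rw [emeet_hole_right, vmeet_hole_right]; exact Fwd.hole
      | fst hsa₂ =>
        cases hf₁ with
        | fst hfa₁ =>
          cases hf₂ with
          | fst hfa₂ =>
            have h1 := iha _ _ _ _ hsa₁ hsa₂ hfa₁ hfa₂
            exact Fwd.fst h1
          | fstHole hfa₂ =>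
            have h1 := iha _ _ _ _ hsa₁ hsa₂ hfa₁ hfa₂
            first | rw [vmeet_hole_left] at h1 | rw [vmeet_hole_right] at h1 | skip
            first | rw [vmeet_hole_left] | rw [vmeet_hole_right] | skip
            exact Fwd.fstHole h1
        | fstHole hfa₁ =>
          first | rw [vmeet_hole_left] | rw [vmeet_hole_right] | skip
          cases hf₂ with
          | fst hfa₂ =>
            have h1 := iha _ _ _ _ hsa₁ hsa₂ hfa₁ hfa₂
            first | rw [vmeet_hole_left] at h1 | rw [vmeet_hole_right] at h1 | skip
            exact Fwd.fstHole h1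
          | fstHole hfa₂ =>
            have h1 := iha _ _ _ _ hsa₁ hsa₂ hfa₁ hfa₂
            first | rw [vmeet_hole_left] at h1 | rw [vmeet_hole_right] at h1 | skip
            exact Fwd.fstHole h1
  | snd ha iha =>
    intro hs₁ hs₂ hf₁ hf₂
    cases hs₁ with
    | hole =>
      cases fwd_hole_inv hf₁
      rw [emeet_hole_left, vmeet_hole_left]; exact Fwd.hole
    | snd hsa₁ =>
      cases hs₂ with
      | hole =>
        cases fwd_hole_inv hf₂
        rw [emeet_hole_right, vmeet_hole_right]; exact Fwd.hole
      | snd hsa₂ =>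
        cases hf₁ with
        | snd hfa₁ =>
          cases hf₂ with
          | snd hfa₂ =>
            have h1 := iha _ _ _ _ hsa₁ hsa₂ hfa₁ hfa₂
            exact Fwd.snd h1
          | sndHole hfa₂ =>
            have h1 := iha _ _ _ _ hsa₁ hsa₂ hfa₁ hfa₂
            first | rw [vmeet_hole_left] at h1 | rw [vmeet_hole_right] at h1 | skip
            first | rw [vmeet_hole_left] | rw [vmeet_hole_right] | skip
            exact Fwd.sndHole h1
        | sndHole hfa₁ =>
          first | rw [vmeet_hole_left] | rw [vmeet_hole_right] | skip
          cases hf₂ with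
          | snd hfa₂ =>
            have h1 := iha _ _ _ _ hsa₁ hsa₂ hfa₁ hfa₂
            first | rw [vmeet_hole_left] at h1 | rw [vmeet_hole_right] at h1 | skip
            exact Fwd.sndHole h1
          | sndHole hfa₂ =>
            have h1 := iha _ _ _ _ hsa₁ hsa₂ hfa₁ hfa₂
            first | rw [vmeet_hole_left] at h1 | rw [vmeet_hole_right] at h1 | skip
            exact Fwd.sndHole h1
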